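/- Let n ≥ 2 and fix 0 < a < ∞. There exists a constant D, depending only on n and a, with the following property: for every convex body K in ℝ^n with V(K) = ω_n, if x is an interior point of K satisfying ∫_{S^{n−1}} u / (h_K(u) − ⟨x,u⟩) dσ(u) = 0 and exp( (1/ω_n) ∫_{S^{n−1}} −log(h_K(u) − ⟨x,u⟩) dσ(u) ) ≥ a, then the diameter of K is at most D. -/

import Mathlib

/-!
Let `p ∈ K` be farthest from `x`, `R = |p - x|` and `f(u) = h_K(u) - ⟨x, u⟩` on the sphere, so
that `0 < f ≤ R` and `⟨p - x, u⟩ ≤ f(u)`. Pairing the vanishing vector integral with `p - x` gives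
`∫ ⟨p - x, u⟩ / f dσ = 0`; the positive part of this integrand is at most `1`, so its negative
part has integral at most `σ(S^{n-1})`. Now `f(u) < R β²` forces either `|⟨p - x, u⟩| ≤ R β`, a
band of measure `O(β)`, or `-⟨p - x, u⟩ / f(u) ≥ 1 / β`, a set of measure `≤ σ(S^{n-1}) β` by
Markov. Hence `σ{log (R / f) > t} = O(e^{-t/2})`, and the layer-cake formula bounds
`∫ log (R / f) dσ = σ(S^{n-1}) log R - ∫ log f dσ` by a constant depending only on `n`. The
hypothesis on `∫ -log f dσ` then bounds `log R`, and `d(K) ≤ 2R`.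
-/

open MeasureTheory Metric Filter

noncomputable section

/-- The support function of a set `K ⊆ ℝⁿ`, as a function of `u`:
`h_K(u) = sup { ⟨y, u⟩ : y ∈ K }`. -/
def suppFn {n : ℕ} (K : Set (EuclideanSpace ℝ (Fin n))) (u : EuclideanSpace ℝ (Fin n)) : ℝ :=
  sSup ((fun y => (inner ℝ y u : ℝ)) '' K)

/-- The spherical Lebesgue measure `σ` on the unit sphere `S^{n-1} ⊆ ℝⁿ`. -/
def sphMeasure (n : ℕ) : Measure (sphere (0 : EuclideanSpace ℝ (Fin n)) 1) :=
  (volume : Measure (EuclideanSpace ℝ (Fin n))).toSphere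

open Set Bornology Real RealInnerProductSpace
open scoped Pointwise

section LogIntegralBound

variable {α : Type*} [MeasurableSpace α] {μ : Measure α} [IsFiniteMeasure μ] {f g : α → ℝ} {R c : ℝ}

lemma integral_neg_part_div_le (hf : ∀ x, 0 < f x) (hgf : ∀ x, g x ≤ f x)
    (hint : Integrable (fun x => g x / f x) μ) (hzero : ∫ x, g x / f x ∂μ = 0) :
    ∫ x, max (-(g x / f x)) 0 ∂μ ≤ μ.real univ := by
  have hsplit : ∫ x, max (g x / f x) 0 ∂μ - ∫ x, max (-(g x / f x)) 0 ∂μ = 0 := by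
    rw [← integral_sub hint.pos_part hint.neg_part]
    simpa only [max_zero_sub_max_neg_zero_eq_self] using hzero
  have hpos_le : ∀ x, max (g x / f x) 0 ≤ 1 :=
    fun x => max_le ((div_le_one (hf x)).2 (hgf x)) zero_le_one
  calc ∫ x, max (-(g x / f x)) 0 ∂μ = ∫ x, max (g x / f x) 0 ∂μ := by linarith
    _ ≤ ∫ _, (1 : ℝ) ∂μ := integral_mono hint.pos_part (integrable_const _) hpos_le
    _ = μ.real univ := by simp

lemma measureReal_lt_mul_sq_le (hf : ∀ x, 0 < f x) (hgf : ∀ x, g x ≤ f x)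
    (hint : Integrable (fun x => g x / f x) μ) (hzero : ∫ x, g x / f x ∂μ = 0)
    (hband : ∀ β, 0 < β → μ.real {x | |g x| ≤ R * β} ≤ c * β) {β : ℝ} (hβ0 : 0 < β)
    (hβ1 : β ≤ 1) :
    μ.real {x | f x < R * β ^ 2} ≤ (c + μ.real univ) * β := by
  have hsub : {x | f x < R * β ^ 2} ⊆
      {x | |g x| ≤ R * β} ∪ {x | β⁻¹ ≤ max (-(g x / f x)) 0} := by
    intro x (hx : f x < R * β ^ 2)
    by_cases hgx : |g x| ≤ R * β
    · exact Or.inl hgx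
    right
    have hg : g x < -(R * β) := by
      cases abs_cases (g x) <;> nlinarith [hgf x, hf x]
    refine le_max_of_le_left (α := ℝ) ?_
    rw [← neg_div, inv_le_iff_one_le_mul₀' hβ0, ← mul_div_assoc, one_le_div (hf x)]
    nlinarith
  have hmarkov : μ.real {x | β⁻¹ ≤ max (-(g x / f x)) 0} ≤ μ.real univ * β := by
    have h := (mul_meas_ge_le_integral_of_nonneg (f := fun x => max (-(g x / f x)) 0)
      (ae_of_all _ fun x => le_max_right _ _)
      hint.neg_part β⁻¹).trans (integral_neg_part_div_le hf hgf hint hzero)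
    rwa [inv_mul_le_iff₀ hβ0, mul_comm β] at h
  calc μ.real {x | f x < R * β ^ 2}
      ≤ μ.real {x | |g x| ≤ R * β} + μ.real {x | β⁻¹ ≤ max (-(g x / f x)) 0} :=
        (measureReal_mono hsub).trans (measureReal_union_le _ _)
    _ ≤ c * β + μ.real univ * β := add_le_add (hband β hβ0) hmarkov
    _ = (c + μ.real univ) * β := by ring

lemma integral_log_div_le (hf : ∀ x, 0 < f x) (hfR : ∀ x, f x ≤ R) (hgf : ∀ x, g x ≤ f x)
    (hint : Integrable (fun x => g x / f x) μ) (hzero : ∫ x, g x / f x ∂μ = 0)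
    (hband : ∀ β, 0 < β → μ.real {x | |g x| ≤ R * β} ≤ c * β)
    (hlog : Integrable (fun x => log (f x)) μ) :
    ∫ x, log (R / f x) ∂μ ≤ 2 * (c + μ.real univ) := by
  have hlog_div : ∀ x, log (R / f x) = log R - log (f x) := fun x =>
    log_div ((hf x).trans_le (hfR x)).ne' (hf x).ne'
  have hint_log_div : Integrable (fun x => log (R / f x)) μ := by
    simp only [hlog_div]
    exact (integrable_const (log R)).sub hlog
  have htail : ∀ t ∈ Ioi (0 : ℝ),
      μ.real {x | t < log (R / f x)} ≤ (c + μ.real univ) * exp (-(1 / 2) * t) := by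
    intro t (ht : 0 < t)
    have hβsq : exp (-(1 / 2) * t) ^ 2 = (exp t)⁻¹ := by
      rw [← exp_nat_mul, ← exp_neg]; ring_nf
    refine (measureReal_mono fun x (hx : t < log (R / f x)) => ?_).trans
      (measureReal_lt_mul_sq_le hf hgf hint hzero hband (exp_pos _) (exp_le_one_iff.2 (by linarith)))
    rw [lt_log_iff_exp_lt (div_pos ((hf x).trans_le (hfR x)) (hf x)), lt_div_iff₀ (hf x)] at hx
    change f x < R * exp (-(1 / 2) * t) ^ 2
    rw [hβsq, ← div_eq_mul_inv, lt_div_iff₀ (exp_pos t), mul_comm]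
    exact hx
  calc ∫ x, log (R / f x) ∂μ = ∫ t in Ioi 0, μ.real {x | t < log (R / f x)} :=
        hint_log_div.integral_eq_integral_meas_lt
          (ae_of_all _ fun x => log_nonneg ((one_le_div (hf x)).2 (hfR x)))
    _ ≤ ∫ t in Ioi 0, (c + μ.real univ) * exp (-(1 / 2) * t) :=
        integral_mono_of_nonneg (ae_of_all _ fun _ => measureReal_nonneg)
          ((exp_neg_integrableOn_Ioi 0 (by norm_num)).const_mul _)
          ((ae_restrict_iff' measurableSet_Ioi).2 (ae_of_all _ htail))
    _ = 2 * (c + μ.real univ) := by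
        rw [integral_const_mul, integral_exp_mul_Ioi (by norm_num)]; norm_num; ring

lemma measureReal_univ_mul_log_le (hf : ∀ x, 0 < f x) (hfR : ∀ x, f x ≤ R)
    (hgf : ∀ x, g x ≤ f x) (hint : Integrable (fun x => g x / f x) μ)
    (hzero : ∫ x, g x / f x ∂μ = 0) (hband : ∀ β, 0 < β → μ.real {x | |g x| ≤ R * β} ≤ c * β)
    (hlog : Integrable (fun x => log (f x)) μ) :
    μ.real univ * log R ≤ 2 * (c + μ.real univ) + ∫ x, log (f x) ∂μ := by
  have h := integral_log_div_le hf hfR hgf hint hzero hband hlog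
  have hlog_div : ∀ x, log (R / f x) = log R - log (f x) := fun x =>
    log_div ((hf x).trans_le (hfR x)).ne' (hf x).ne'
  simp only [hlog_div] at h
  rw [integral_sub (integrable_const _) hlog, integral_const, smul_eq_mul] at h
  linarith

end LogIntegralBound

section SupportFunction

variable {n : ℕ} {K : Set (EuclideanSpace ℝ (Fin n))}

lemma inner_le_suppFn (hK : IsBounded K) {y : EuclideanSpace ℝ (Fin n)} (hy : y ∈ K)
    (u : EuclideanSpace ℝ (Fin n)) : ⟪y, u⟫ ≤ suppFn K u := by
  obtain ⟨M, hM⟩ := hK.exists_norm_le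
  refine le_csSup ⟨M * ‖u‖, ?_⟩ (mem_image_of_mem _ hy)
  rintro - ⟨z, hz, rfl⟩
  exact (real_inner_le_norm z u).trans (mul_le_mul_of_nonneg_right (hM z hz) (norm_nonneg u))

lemma suppFn_le (hne : K.Nonempty) {u : EuclideanSpace ℝ (Fin n)} {c : ℝ}
    (h : ∀ y ∈ K, ⟪y, u⟫ ≤ c) : suppFn K u ≤ c :=
  csSup_le (hne.image _) (forall_mem_image.2 h)

lemma continuous_suppFn (hK : IsBounded K) : Continuous (suppFn K) := by
  rcases K.eq_empty_or_nonempty with rfl | hne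
  · have : suppFn (∅ : Set (EuclideanSpace ℝ (Fin n))) = fun _ => 0 := by
      ext u; simp [suppFn]
    exact this ▸ continuous_const
  obtain ⟨M, hM⟩ := hK.exists_norm_le
  refine (LipschitzWith.of_le_add_mul' M fun u v => suppFn_le hne fun y hy => ?_).continuous
  calc ⟪y, u⟫ = ⟪y, v⟫ + ⟪y, u - v⟫ := by rw [inner_sub_right]; ring
    _ ≤ suppFn K v + M * dist u v := by
      gcongr
      · exact inner_le_suppFn hK hy v
      · rw [dist_eq_norm]
        exact (real_inner_le_norm y _).trans (mul_le_mul_of_nonneg_right (hM y hy) (norm_nonneg _))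

lemma suppFn_sub_inner_le (hne : K.Nonempty) {x : EuclideanSpace ℝ (Fin n)} {R : ℝ}
    (hR : K ⊆ closedBall x R) (u : EuclideanSpace ℝ (Fin n)) :
    suppFn K u - ⟪x, u⟫ ≤ R * ‖u‖ := by
  refine sub_le_iff_le_add'.2 (suppFn_le hne fun y hy => ?_)
  have hyx : ‖y - x‖ ≤ R := mem_closedBall_iff_norm.1 (hR hy)
  calc ⟪y, u⟫ = ⟪x, u⟫ + ⟪y - x, u⟫ := by rw [inner_sub_left]; ring
    _ ≤ ⟪x, u⟫ + R * ‖u‖ := by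
      gcongr
      exact (real_inner_le_norm _ _).trans (mul_le_mul_of_nonneg_right hyx (norm_nonneg _))

lemma le_suppFn_sub_inner (hK : IsBounded K) {x : EuclideanSpace ℝ (Fin n)} {r : ℝ}
    (hr0 : 0 ≤ r) (hr : closedBall x r ⊆ K) {u : EuclideanSpace ℝ (Fin n)} (hu : ‖u‖ = 1) :
    r ≤ suppFn K u - ⟪x, u⟫ := by
  have hmem : x + r • u ∈ K := hr (by simp [norm_smul, hu, abs_of_nonneg hr0])
  have h := inner_le_suppFn hK hmem u
  rw [inner_add_left, real_inner_smul_left, real_inner_self_eq_norm_sq, hu] at h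
  linarith

lemma inner_sub_le_suppFn_sub_inner (hK : IsBounded K) {p : EuclideanSpace ℝ (Fin n)}
    (hp : p ∈ K) (x u : EuclideanSpace ℝ (Fin n)) : ⟪p - x, u⟫ ≤ suppFn K u - ⟪x, u⟫ := by
  rw [inner_sub_left]
  linarith [inner_le_suppFn hK hp u]

end SupportFunction

lemma volume_abs_inner_le_inter_closedBall_le {m : ℕ} {w : EuclideanSpace ℝ (Fin (m + 1))}
    (hw : ‖w‖ = 1) {s : ℝ} (hs : 0 ≤ s) :
    volume ({y | |⟪w, y⟫| ≤ s} ∩ closedBall 0 1) ≤ ENNReal.ofReal (2 ^ (m + 1) * s) := by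
  set e : EuclideanSpace ℝ (Fin (m + 1)) := EuclideanSpace.single 0 1
  set T := (ℝ ∙ (w - e))ᗮ.reflection
  have hTw : T w = e := Submodule.reflection_sub (by simp [e, hw])
  set c : Fin (m + 1) → ℝ := Fin.cons s fun _ => 1
  set box : Set (Fin (m + 1) → ℝ) := univ.pi fun i => Icc (-c i) (c i)
  have hsub : {y | |⟪w, y⟫| ≤ s} ∩ closedBall 0 1 ⊆
      T ⁻¹' ((MeasurableEquiv.toLp 2 (Fin (m + 1) → ℝ)).symm ⁻¹' box) := by
    rintro y ⟨hy : |⟪w, y⟫| ≤ s, hy1⟩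
    simp only [box, mem_preimage, mem_univ_pi, mem_Icc, ← abs_le]
    refine Fin.cases ?_ (fun i => ?_)
    · have : ⟪w, y⟫ = T y 0 := by
        rw [← T.inner_map_map, hTw, EuclideanSpace.inner_single_left]; simp
      simpa [c, this] using hy
    · have := (PiLp.norm_apply_le (T y) i.succ).trans_eq (T.norm_map y)
      simpa [c] using this.trans (mem_closedBall_zero_iff.1 hy1)
  have hbox : MeasurableSet box := MeasurableSet.univ_pi fun _ => measurableSet_Icc
  calc volume ({y | |⟪w, y⟫| ≤ s} ∩ closedBall 0 1)
      ≤ volume (T ⁻¹' ((MeasurableEquiv.toLp 2 (Fin (m + 1) → ℝ)).symm ⁻¹' box)) :=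
        measure_mono hsub
    _ = volume box := by
        rw [T.measurePreserving.measure_preimage
            ((MeasurableEquiv.toLp 2 _).symm.measurable hbox).nullMeasurableSet,
          (EuclideanSpace.volume_preserving_symm_measurableEquiv_toLp _).measure_preimage
            hbox.nullMeasurableSet]
    _ = ENNReal.ofReal (2 ^ (m + 1) * s) := by
        rw [volume_pi_pi, Fin.prod_univ_succ]
        simp only [Real.volume_Icc, c, Fin.cons_zero, Fin.cons_succ, Finset.prod_const,
          Finset.card_univ, Fintype.card_fin]
        rw [← ENNReal.ofReal_pow (by norm_num), ← ENNReal.ofReal_mul (by linarith)]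
        congr 1; ring

lemma sphMeasure_real_abs_inner_le_le {n : ℕ} (hn : 0 < n) {v : EuclideanSpace ℝ (Fin n)}
    (hv : v ≠ 0) {s : ℝ} (hs : 0 ≤ s) :
    (sphMeasure n).real {u | |⟪v, (u : EuclideanSpace ℝ (Fin n))⟫| ≤ ‖v‖ * s} ≤ n * 2 ^ n * s := by
  obtain ⟨m, rfl⟩ := Nat.exists_eq_add_one_of_ne_zero hn.ne'
  set A := {u : sphere (0 : EuclideanSpace ℝ (Fin (m + 1))) 1 | |⟪v, (u : _)⟫| ≤ ‖v‖ * s}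
  have hA : MeasurableSet A :=
    (isClosed_le (continuous_const.inner continuous_subtype_val).abs continuous_const).measurableSet
  have hv' : 0 < ‖v‖ := norm_pos_iff.2 hv
  have hcone : Ioo (0 : ℝ) 1 • ((↑) '' A : Set (EuclideanSpace ℝ (Fin (m + 1)))) ⊆
      {y | |⟪‖v‖⁻¹ • v, y⟫| ≤ s} ∩ closedBall 0 1 := by
    rintro - ⟨t, ⟨ht0, ht1⟩, -, ⟨u, hu : |⟪v, (u : _)⟫| ≤ ‖v‖ * s, rfl⟩, rfl⟩
    have hu1 : ‖(u : EuclideanSpace ℝ (Fin (m + 1)))‖ = 1 := by simp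
    refine ⟨?_, ?_⟩
    · change |⟪‖v‖⁻¹ • v, t • (u : EuclideanSpace ℝ (Fin (m + 1)))⟫| ≤ s
      rw [real_inner_smul_left, real_inner_smul_right, abs_mul, abs_mul, abs_of_pos ht0,
        abs_inv, abs_norm, inv_mul_le_iff₀ hv']
      nlinarith [abs_nonneg ⟪v, (u : EuclideanSpace ℝ (Fin (m + 1)))⟫]
    · simp [norm_smul, hu1, abs_of_pos ht0, ht1.le]
  have hunit : ‖‖v‖⁻¹ • v‖ = 1 := by simp [norm_smul, hv'.ne']
  have hle : sphMeasure (m + 1) A ≤ (m + 1 : ℕ) * ENNReal.ofReal (2 ^ (m + 1) * s) := by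
    rw [sphMeasure, Measure.toSphere_apply' _ hA, finrank_euclideanSpace_fin]
    gcongr
    exact (measure_mono hcone).trans (volume_abs_inner_le_inter_closedBall_le hunit hs)
  calc (sphMeasure (m + 1)).real A
      ≤ ((m + 1 : ℕ) * ENNReal.ofReal (2 ^ (m + 1) * s)).toReal :=
        ENNReal.toReal_mono (by finiteness) hle
    _ = (m + 1 : ℕ) * 2 ^ (m + 1) * s := by
        rw [ENNReal.toReal_mul, ENNReal.toReal_natCast, ENNReal.toReal_ofReal (by positivity), mul_assoc]

instance (n : ℕ) : IsFiniteMeasure (sphMeasure n) :=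
  inferInstanceAs (IsFiniteMeasure (volume : Measure (EuclideanSpace ℝ (Fin n))).toSphere)

lemma sphMeasure_real_univ_pos {n : ℕ} (hn : 0 < n) : 0 < (sphMeasure n).real univ := by
  rw [measureReal_def, sphMeasure, Measure.toSphere_apply_univ, finrank_euclideanSpace_fin]
  exact ENNReal.toReal_pos (mul_ne_zero (by simpa using hn.ne') (measure_ball_pos _ _ one_pos).ne')
    (by finiteness)

lemma Continuous.integrable_sphMeasure {n : ℕ} {E : Type*} [NormedAddCommGroup E]
    {φ : sphere (0 : EuclideanSpace ℝ (Fin n)) 1 → E} (hφ : Continuous φ) :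
    Integrable φ (sphMeasure n) :=
  hφ.integrable_of_hasCompactSupport (.of_compactSpace φ)

lemma exists_subset_closedBall_mul_log_le {n : ℕ} (hn : 0 < n)
    {K : Set (EuclideanSpace ℝ (Fin n))} (hK : IsCompact K) {x : EuclideanSpace ℝ (Fin n)}
    (hx : x ∈ interior K)
    (hgrad : ∫ u : sphere (0 : EuclideanSpace ℝ (Fin n)) 1,
      (suppFn K u - ⟪x, u⟫)⁻¹ • (u : EuclideanSpace ℝ (Fin n)) ∂(sphMeasure n) = 0) :
    ∃ R > 0, K ⊆ closedBall x R ∧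
      (sphMeasure n).real univ * log R ≤ 2 * (n * 2 ^ n + (sphMeasure n).real univ) +
        ∫ u : sphere (0 : EuclideanSpace ℝ (Fin n)) 1, log (suppFn K u - ⟪x, u⟫) ∂(sphMeasure n) := by
  have : NeZero n := ⟨hn.ne'⟩
  obtain ⟨p, hpK, hpmax⟩ := hK.exists_isMaxOn ⟨x, interior_subset hx⟩
    (continuous_id.dist continuous_const).continuousOn
  set R := dist p x
  have hKR : K ⊆ closedBall x R := fun y hy => hpmax hy
  obtain ⟨r, hr, hrK⟩ : ∃ r > 0, closedBall x r ⊆ K :=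
    nhds_basis_closedBall.mem_iff.1 (mem_interior_iff_mem_nhds.1 hx)
  set f : sphere (0 : EuclideanSpace ℝ (Fin n)) 1 → ℝ := fun u => suppFn K u - ⟪x, u⟫
  have hfR : ∀ u, f u ≤ R := fun u =>
    (suppFn_sub_inner_le ⟨x, interior_subset hx⟩ hKR u).trans_eq (by simp)
  have hf : ∀ u, 0 < f u := fun u =>
    hr.trans_le (le_suppFn_sub_inner hK.isBounded hr.le hrK (norm_eq_of_mem_sphere u))
  have hfc : Continuous f := ((continuous_suppFn hK.isBounded).comp continuous_subtype_val).sub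
    (continuous_const.inner continuous_subtype_val)
  have hR : 0 < R := by
    obtain ⟨u⟩ : Nonempty (sphere (0 : EuclideanSpace ℝ (Fin n)) 1) :=
      (NormedSpace.sphere_nonempty.2 zero_le_one).to_subtype
    exact (hf u).trans_le (hfR u)
  have hzero : ∫ u, ⟪p - x, (u : EuclideanSpace ℝ (Fin n))⟫ / f u ∂(sphMeasure n) = 0 := by
    have hint : Integrable (fun u => (f u)⁻¹ • (u : EuclideanSpace ℝ (Fin n))) (sphMeasure n) :=
      ((hfc.inv₀ fun u => (hf u).ne').smul continuous_subtype_val).integrable_sphMeasure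
    simp_rw [div_eq_inv_mul, ← real_inner_smul_right]
    rw [integral_inner hint, hgrad, inner_zero_right]
  have hband : ∀ β, 0 < β →
      (sphMeasure n).real {u | |⟪p - x, (u : EuclideanSpace ℝ (Fin n))⟫| ≤ R * β} ≤
        n * 2 ^ n * β := by
    intro β hβ
    rw [show R = ‖p - x‖ from dist_eq_norm p x]
    exact sphMeasure_real_abs_inner_le_le hn (sub_ne_zero.2 (dist_pos.1 hR)) hβ.le
  refine ⟨R, hR, hKR, measureReal_univ_mul_log_le hf hfR
    (fun u => inner_sub_le_suppFn_sub_inner hK.isBounded hpK x u) ?_ hzero hband ?_⟩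
  · exact ((continuous_const.inner continuous_subtype_val).div hfc
      fun u => (hf u).ne').integrable_sphMeasure
  · exact (hfc.log fun u => (hf u).ne').integrable_sphMeasure

/-- for `n ≥ 2` and `0 < a < ∞`, there is `D = D(n,a)` such that every convex body
`K` with `V(K) = ω_n` admitting an interior point `x` with `∫ u / (h_K(u) - ⟨x,u⟩) dσ(u) = 0` and
`exp((1/ω_n) ∫ -log (h_K(u) - ⟨x,u⟩) dσ(u)) ≥ a` has diameter at most `D`. -/
theorem statement_7 {n : ℕ} (hn : 2 ≤ n) (a : ℝ) (ha : 0 < a) :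
    ∃ D : ℝ, ∀ (K : Set (EuclideanSpace ℝ (Fin n))),
      IsCompact K → Convex ℝ K → (interior K).Nonempty → volume K = volume (ball (0 : EuclideanSpace ℝ (Fin n)) 1) →
      ∀ x ∈ interior K,
        (∫ u : sphere (0 : EuclideanSpace ℝ (Fin n)) 1, ((suppFn K u - (inner ℝ x (u : EuclideanSpace ℝ (Fin n)) : ℝ))⁻¹) • (u : EuclideanSpace ℝ (Fin n)) ∂(sphMeasure n)) = 0 →
        a ≤ Real.exp (((volume (ball (0 : EuclideanSpace ℝ (Fin n)) 1)).toReal)⁻¹ * (∫ u : sphere (0 : EuclideanSpace ℝ (Fin n)) 1, -Real.log (suppFn K u - (inner ℝ x (u : EuclideanSpace ℝ (Fin n)) : ℝ)) ∂(sphMeasure n))) →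
        Metric.diam K ≤ D := by
  have hn0 : 0 < n := by omega
  set σ := (sphMeasure n).real univ
  set ω := (volume (ball (0 : EuclideanSpace ℝ (Fin n)) 1)).toReal
  have hσ : 0 < σ := sphMeasure_real_univ_pos hn0
  have hω : 0 < ω := ENNReal.toReal_pos (measure_ball_pos _ _ one_pos).ne' measure_ball_lt_top.ne
  refine ⟨2 * exp ((2 * (n * 2 ^ n + σ) - ω * log a) / σ),
    fun K hK _ _ _ x hx hgrad hent => ?_⟩
  obtain ⟨R, hR, hKR, hlogR⟩ := exists_subset_closedBall_mul_log_le hn0 hK hx hgrad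
  have hloga : ω * log a ≤ -∫ u : sphere (0 : EuclideanSpace ℝ (Fin n)) 1,
      log (suppFn K u - ⟪x, u⟫) ∂(sphMeasure n) := by
    rw [← integral_neg, ← le_inv_mul_iff₀ hω, log_le_iff_le_exp ha]
    exact hent
  calc diam K ≤ 2 * R := diam_le_of_subset_closedBall hR.le hKR
    _ ≤ 2 * exp ((2 * (n * 2 ^ n + σ) - ω * log a) / σ) := by
      gcongr
      rw [← log_le_iff_le_exp hR, le_div_iff₀ hσ]
      linarith
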